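/- arXiv:2504.16336 — 2 statements merged into one kernel-verified Lean document; each statement's English description precedes it below -/
import Mathlib

section
/- Let f : ℂ → ℂ be holomorphic on the open unit disk 𝔻 = {z ∈ ℂ : |z| < 1} with Re f(z) > 0 for every z ∈ 𝔻, and suppose that equality |f′(z₀)| · (1 − |z₀|²) = 2 Re f(z₀) holds in the Harnack gradient inequality at some point z₀ ∈ 𝔻. Then there exist m ∈ ℂ with |m| = 1 and a constant C > 0 such that Re f(z) = C · (1 − |z|²)/|m − z|² for every z ∈ 𝔻; that is, the positive harmonic function h = Re f is a positive multiple of the Poisson kernel of 𝔻 with pole m. (This is the rigidity lemma [AMN, Lemma 2.3] which the paper uses in its proof of Theorem 1.2: a positive harmonic function on 𝔻 whose hyperbolic gradient of log h attains norm 1 at one point must be a multiple of a Poisson kernel.) -/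
/-!
With `a = f z₀`, precompose `f` with the disk automorphism `diskMobius z₀` taking `0` to `z₀`,
and postcompose with the Cayley map `w ↦ (w - a) / (w + conj a)` of the right half-plane onto the
disk. The resulting self-map `g` of the disk fixes `0`, and the equality in the Harnack inequality
says precisely that `‖g' 0‖ = 1`, so by the equality case of the Schwarz lemma `g` is a rotation.
Inverting the Cayley map, the real part of `f ∘ diskMobius z₀` is `Re a` times a Poisson kernel,
and a disk automorphism carries a Poisson kernel to a positive multiple of another one.
-/

open Complex ComplexConjugate Metric Set

noncomputable def diskMobius (b z : ℂ) : ℂ := (z + b) / (1 + conj b * z)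

namespace diskMobius

variable {b z : ℂ}

lemma one_add_conj_mul_ne_zero (hb : ‖b‖ < 1) (hz : ‖z‖ ≤ 1) : 1 + conj b * z ≠ 0 := by
  intro h
  have : ‖conj b * z‖ = 1 := by rw [show conj b * z = -1 by linear_combination h]; simp
  rw [norm_mul, norm_conj] at this
  nlinarith [norm_nonneg b, norm_nonneg z]

lemma sq_norm_one_add_conj_mul_sub_sq_norm (b z : ℂ) :
    ‖1 + conj b * z‖ ^ 2 - ‖z + b‖ ^ 2 = (1 - ‖b‖ ^ 2) * (1 - ‖z‖ ^ 2) := by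
  simp only [← normSq_eq_norm_sq, normSq_apply, add_re, add_im, mul_re, mul_im, conj_re,
    conj_im, one_re, one_im]
  ring

lemma one_sub_sq_norm (hb : ‖b‖ < 1) (hz : ‖z‖ ≤ 1) :
    1 - ‖diskMobius b z‖ ^ 2 = (1 - ‖b‖ ^ 2) * (1 - ‖z‖ ^ 2) / ‖1 + conj b * z‖ ^ 2 := by
  have hd := norm_ne_zero_iff.mpr (one_add_conj_mul_ne_zero hb hz)
  rw [diskMobius, norm_div, div_pow, ← sq_norm_one_add_conj_mul_sub_sq_norm,
    sub_div, div_self (pow_ne_zero 2 hd)]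

lemma norm_lt_one (hb : ‖b‖ < 1) (hz : ‖z‖ < 1) : ‖diskMobius b z‖ < 1 := by
  have hb' := pow_lt_one₀ (norm_nonneg b) hb two_ne_zero
  have hz' := pow_lt_one₀ (norm_nonneg z) hz two_ne_zero
  have hd := norm_pos_iff.mpr (one_add_conj_mul_ne_zero hb hz.le)
  have : 0 < 1 - ‖diskMobius b z‖ ^ 2 := by
    rw [one_sub_sq_norm hb hz.le]
    exact div_pos (mul_pos (by linarith) (by linarith)) (by positivity)
  exact (pow_lt_one_iff_of_nonneg (norm_nonneg _) two_ne_zero).mp (by linarith)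

lemma norm_eq_one (hb : ‖b‖ < 1) (hz : ‖z‖ = 1) : ‖diskMobius b z‖ = 1 := by
  have h := one_sub_sq_norm hb hz.le
  rw [hz, one_pow, sub_self, mul_zero, zero_div, sub_eq_zero] at h
  exact (pow_eq_one_iff_of_nonneg (norm_nonneg _) two_ne_zero).mp h.symm

lemma mapsTo_ball (hb : ‖b‖ < 1) : MapsTo (diskMobius b) (ball 0 1) (ball 0 1) := fun _ hz ↦
  mem_ball_zero_iff.mpr (norm_lt_one hb (mem_ball_zero_iff.mp hz))

lemma differentiableOn (hb : ‖b‖ < 1) : DifferentiableOn ℂ (diskMobius b) (ball 0 1) :=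
  fun z hz ↦ by
    refine (DifferentiableAt.div (by fun_prop) (by fun_prop) ?_).differentiableWithinAt
    exact one_add_conj_mul_ne_zero hb (mem_ball_zero_iff.mp hz).le

@[simp] lemma apply_zero (b : ℂ) : diskMobius b 0 = b := by simp [diskMobius]

lemma hasDerivAt_zero (b : ℂ) : HasDerivAt (diskMobius b) (1 - ‖b‖ ^ 2 : ℝ) 0 := by
  have h := ((hasDerivAt_id' (0 : ℂ)).add_const b).fun_div
    (((hasDerivAt_id' (0 : ℂ)).const_mul (conj b)).const_add 1) (by simp)
  refine h.congr_deriv ?_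
  simp [mul_conj, normSq_eq_norm_sq]

lemma apply_neg_apply (hb : ‖b‖ < 1) (hz : ‖z‖ ≤ 1) : diskMobius b (diskMobius (-b) z) = z := by
  have h₁ := one_add_conj_mul_ne_zero (b := -b) (by rwa [norm_neg]) hz
  have h₂ : (1 : ℂ) - conj b * b ≠ 0 := by
    rw [mul_comm, mul_conj, normSq_eq_norm_sq]
    exact_mod_cast (sub_pos.mpr (pow_lt_one₀ (norm_nonneg b) hb two_ne_zero)).ne'
  simp only [diskMobius, map_neg, neg_mul, ← sub_eq_add_neg] at h₁ ⊢
  rw [div_add' _ _ _ h₁, mul_div_assoc', one_add_div h₁, div_div_div_cancel_right₀ h₁,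
    div_eq_iff (by convert h₂ using 1; ring)]
  ring

lemma sub_eq_mul_div (hb : ‖b‖ < 1) (hz : ‖z‖ ≤ 1) {m : ℂ} (hm : ‖m‖ ≤ 1) :
    m - diskMobius b z = (1 - conj b * m) * (diskMobius (-b) m - z) / (1 + conj b * z) := by
  have h₁ := one_add_conj_mul_ne_zero (b := -b) (by rwa [norm_neg]) hm
  have h₂ := one_add_conj_mul_ne_zero hb hz
  simp only [diskMobius, map_neg, neg_mul, ← sub_eq_add_neg] at h₁ ⊢
  rw [eq_div_iff h₂, sub_mul, div_mul_cancel₀ _ h₂, mul_sub, mul_div_cancel₀ _ h₁]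
  ring

end diskMobius

lemma deriv_comp_diskMobius_zero {f : ℂ → ℂ} {b : ℂ} (hf : DifferentiableAt ℂ f b) :
    deriv (f ∘ diskMobius b) 0 = deriv f b * (1 - ‖b‖ ^ 2 : ℝ) := by
  rw [← diskMobius.apply_zero b] at hf
  simpa using (hf.hasDerivAt.comp 0 (diskMobius.hasDerivAt_zero b)).deriv

noncomputable def cayley (a w : ℂ) : ℂ := (w - a) / (w + conj a)

namespace cayley

variable {a w : ℂ}

lemma add_conj_ne_zero (ha : 0 < a.re) (hw : 0 < w.re) : w + conj a ≠ 0 := by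
  intro h
  have := congrArg re h
  simp only [add_re, conj_re, zero_re] at this
  linarith

lemma norm_lt_one (ha : 0 < a.re) (hw : 0 < w.re) : ‖cayley a w‖ < 1 := by
  have hd := norm_pos_iff.mpr (add_conj_ne_zero ha hw)
  have key : ‖w + conj a‖ ^ 2 - ‖w - a‖ ^ 2 = 4 * w.re * a.re := by
    simp only [← normSq_eq_norm_sq, normSq_apply, add_re, add_im, sub_re, sub_im, conj_re,
      conj_im]
    ring
  rw [cayley, norm_div, div_lt_one hd]
  nlinarith [norm_nonneg (w - a), mul_pos hw ha]

@[simp] lemma apply_self (a : ℂ) : cayley a a = 0 := by simp [cayley]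

lemma hasDerivAt_self (ha : 0 < a.re) : HasDerivAt (cayley a) ((2 * a.re : ℝ) : ℂ)⁻¹ a := by
  have hd := add_conj_ne_zero ha ha
  have h := ((hasDerivAt_id' a).sub_const a).fun_div ((hasDerivAt_id' a).add_const (conj a)) hd
  refine h.congr_deriv ?_
  rw [sub_self, zero_mul, sub_zero, one_mul, sq, div_mul_cancel_left₀ hd, add_conj]

lemma re_eq_of_cayley_eq {ζ : ℂ} (hw : w + conj a ≠ 0) (hζ : ζ ≠ 1) (h : cayley a w = ζ) :
    w.re = a.re * poissonKernel 0 ζ 1 := by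
  have hζ' : 1 - ζ ≠ 0 := sub_ne_zero.mpr hζ.symm
  have hw' : w - a = ζ * (w + conj a) := by rw [← h, cayley, div_mul_cancel₀ _ hw]
  have hsplit : w = a.re * ((1 + ζ) / (1 - ζ)) + a.im * I := by
    rw [mul_div_assoc', div_add' _ _ _ hζ', eq_div_iff hζ']
    have hconj : a + conj a = 2 * a.re := by rw [add_conj]; push_cast; ring
    linear_combination hw' + (ζ - 1) * re_add_im a + ζ * hconj
  have hP : poissonKernel 0 ζ 1 = ((1 + ζ) / (1 - ζ)).re := by
    simp [poissonKernel_eq_re_herglotzRieszKernel, herglotzRieszKernel]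
  rw [hP, hsplit]
  simp

end cayley

lemma poissonKernel_zero_mul_mul {l : ℂ} (hl : ‖l‖ = 1) (w z : ℂ) :
    poissonKernel 0 (l * w) (l * z) = poissonKernel 0 w z := by
  simp [poissonKernel, ← mul_sub, hl]

lemma poissonKernel_zero_of_norm_eq_one {m : ℂ} (hm : ‖m‖ = 1) (z : ℂ) :
    poissonKernel 0 z m = (1 - ‖z‖ ^ 2) / ‖m - z‖ ^ 2 := by
  simp [poissonKernel, hm]

lemma poissonKernel_diskMobius {b m z : ℂ} (hb : ‖b‖ < 1) (hm : ‖m‖ = 1) (hz : ‖z‖ < 1) :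
    poissonKernel 0 (diskMobius b z) m =
      (1 - ‖b‖ ^ 2) / ‖1 - conj b * m‖ ^ 2 * poissonKernel 0 z (diskMobius (-b) m) := by
  have hm' : ‖diskMobius (-b) m‖ = 1 := diskMobius.norm_eq_one (by rwa [norm_neg]) hm
  have h₁ : ‖1 - conj b * m‖ ≠ 0 := by
    simpa [sub_eq_add_neg] using
      diskMobius.one_add_conj_mul_ne_zero (b := -b) (by rwa [norm_neg]) hm.le
  have h₂ : ‖1 + conj b * z‖ ≠ 0 := norm_ne_zero_iff.mpr
    (diskMobius.one_add_conj_mul_ne_zero hb hz.le)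
  have h₃ : ‖diskMobius (-b) m - z‖ ≠ 0 := by
    rw [norm_ne_zero_iff, sub_ne_zero]
    rintro rfl
    exact hz.ne hm'
  rw [poissonKernel_zero_of_norm_eq_one hm, poissonKernel_zero_of_norm_eq_one hm',
    diskMobius.one_sub_sq_norm hb hz.le, diskMobius.sub_eq_mul_div hb hz.le hm.le, norm_div,
    norm_mul]
  field_simp

theorem exists_re_eq_mul_poissonKernel_of_norm_deriv_eq {F : ℂ → ℂ}
    (hF : DifferentiableOn ℂ F (ball 0 1)) (hre : ∀ z ∈ ball (0 : ℂ) 1, 0 < (F z).re)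
    (heq : ‖deriv F 0‖ = 2 * (F 0).re) :
    ∃ m : ℂ, ‖m‖ = 1 ∧ ∀ z ∈ ball (0 : ℂ) 1, (F z).re = (F 0).re * poissonKernel 0 z m := by
  set a := F 0
  have ha : 0 < a.re := hre 0 (mem_ball_self one_pos)
  have hg : DifferentiableOn ℂ (cayley a ∘ F) (ball 0 1) :=
    ((hF.sub_const a).div (hF.add_const (conj a)) fun z hz ↦
      cayley.add_conj_ne_zero ha (hre z hz))
  have hmaps : MapsTo (cayley a ∘ F) (ball 0 1) (closedBall ((cayley a ∘ F) 0) 1) := fun z hz ↦ by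
    simpa [a] using (cayley.norm_lt_one ha (hre z hz)).le
  have hderiv : ‖dslope (cayley a ∘ F) 0 0‖ = 1 / 1 := by
    have hFd := (hF.differentiableAt (ball_mem_nhds 0 one_pos)).hasDerivAt
    rw [dslope_same, ((cayley.hasDerivAt_self ha).comp 0 hFd).deriv, norm_mul, heq, norm_inv,
      norm_real, Real.norm_of_nonneg (by positivity), inv_mul_cancel₀ (by positivity), div_one]
  obtain ⟨l, hl, hgl⟩ :=
    affine_of_mapsTo_ball_of_exists_norm_dslope_eq_div' hg hmaps ⟨0, mem_ball_self one_pos, hderiv⟩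
  rw [div_one] at hl
  refine ⟨conj l, by rwa [norm_conj], fun z hz ↦ ?_⟩
  have hzl : ‖z * l‖ < 1 := by rwa [norm_mul, hl, mul_one, ← mem_ball_zero_iff]
  have hcayley : cayley a (F z) = z * l := by simpa [a] using hgl hz
  rw [cayley.re_eq_of_cayley_eq (cayley.add_conj_ne_zero ha (hre z hz))
    (fun h ↦ by simp [h] at hzl) hcayley]
  have hll : conj l * l = 1 := by rw [conj_mul', hl]; simp
  congr 1
  simpa [mul_comm z, ← mul_assoc, hll] using
    (poissonKernel_zero_mul_mul (l := conj l) (by rwa [norm_conj]) (z * l) 1).symm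

/-- Rigidity in the Harnack gradient inequality: if `f` is holomorphic on the open
unit disk with positive real part and `|f'(z₀)| * (1 - |z₀|²) = 2 * Re f(z₀)` at some
point `z₀` of the disk, then `Re f` is a positive multiple of a Poisson kernel:
`Re f(z) = C * (1 - |z|²) / |m - z|²` for some `|m| = 1` and `C > 0`. -/
theorem harnack_equality_rigidity
    (f : ℂ → ℂ) (hf : DifferentiableOn ℂ f (Metric.ball 0 1))
    (hre : ∀ z ∈ Metric.ball (0 : ℂ) 1, 0 < (f z).re)
    (z₀ : ℂ) (hz₀ : z₀ ∈ Metric.ball (0 : ℂ) 1)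
    (heq : ‖deriv f z₀‖ * (1 - ‖z₀‖ ^ 2) = 2 * (f z₀).re) :
    ∃ m : ℂ, ‖m‖ = 1 ∧ ∃ C : ℝ, 0 < C ∧
      ∀ z ∈ Metric.ball (0 : ℂ) 1,
        (f z).re = C * (1 - ‖z‖ ^ 2) / ‖m - z‖ ^ 2 := by
  have hz₀' : ‖z₀‖ < 1 := mem_ball_zero_iff.mp hz₀
  have hz₀'' : ‖-z₀‖ < 1 := by rwa [norm_neg]
  have hdist : 0 < 1 - ‖z₀‖ ^ 2 := sub_pos.mpr (pow_lt_one₀ (norm_nonneg _) hz₀' two_ne_zero)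
  have hF : DifferentiableOn ℂ (f ∘ diskMobius z₀) (ball 0 1) :=
    hf.comp (diskMobius.differentiableOn hz₀') (diskMobius.mapsTo_ball hz₀')
  have hFderiv : ‖deriv (f ∘ diskMobius z₀) 0‖ = 2 * ((f ∘ diskMobius z₀) 0).re := by
    rw [deriv_comp_diskMobius_zero (hf.differentiableAt (isOpen_ball.mem_nhds hz₀)), norm_mul,
      norm_real, Real.norm_of_nonneg hdist.le, heq, Function.comp_apply, diskMobius.apply_zero]
  obtain ⟨m, hm, hFm⟩ := exists_re_eq_mul_poissonKernel_of_norm_deriv_eq hF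
    (fun z hz ↦ hre _ (diskMobius.mapsTo_ball hz₀' hz)) hFderiv
  have hm₀ := norm_pos_iff.mpr (diskMobius.one_add_conj_mul_ne_zero hz₀' hm.le)
  refine ⟨diskMobius z₀ m, diskMobius.norm_eq_one hz₀' hm,
    (f z₀).re * ((1 - ‖z₀‖ ^ 2) / ‖1 + conj z₀ * m‖ ^ 2),
    mul_pos (hre z₀ hz₀) (by positivity), fun z hz ↦ ?_⟩
  have hz' : ‖z‖ < 1 := mem_ball_zero_iff.mp hz
  have hfz := hFm (diskMobius (-z₀) z) (diskMobius.mapsTo_ball hz₀'' hz)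
  simp only [Function.comp_apply, diskMobius.apply_neg_apply hz₀' hz'.le, diskMobius.apply_zero]
    at hfz
  rw [hfz, poissonKernel_diskMobius hz₀'' hm hz', neg_neg,
    poissonKernel_zero_of_norm_eq_one (diskMobius.norm_eq_one hz₀' hm)]
  simp only [norm_neg, map_neg, neg_mul, sub_neg_eq_add]
  ring
end

section
/- Let h : ℂ × ℝ → ℝ satisfy: (i) for every t ∈ ℝ, the function z ↦ h(z,t) is harmonic on the open unit disk 𝔻 = {z ∈ ℂ : |z| < 1}, is positive there, and satisfies h(0,t) = 1; (ii) for every z ∈ 𝔻, the function t ↦ h(z,t) is Lebesgue measurable. Define Φ : 𝔻 × ℝ → 𝔻 × ℝ by Φ(z,t) = (z, φ(z,t)) with φ(z,t) := ∫₀ᵗ h(z,s) ds (signed integral). Then Φ is a well-defined bijection of 𝔻 × ℝ onto itself which is a homeomorphism, and both Φ and Φ⁻¹ are locally Lipschitz on 𝔻 × ℝ (with respect to the product of the Euclidean metrics); moreover for each fixed t, z ↦ φ(z,t) is harmonic on 𝔻. (This is the locally bi-Lipschitz fiberwise-integration map φ̃ of Section 4.1, used to put a smooth structure on the suspension bundle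 for which the action is bi-Lipschitz; local bi-Lipschitzness follows from Harnack's inequality.) -/
/-!
By Harnack's inequality, the normalisation `h (0, t) = 1` forces
`(1 - r) / (1 + r) ≤ h (z, t) ≤ (1 + r) / (1 - r)` for `‖z‖ ≤ r`, and Cauchy's estimate applied to
a holomorphic function with real part `h (·, t)` makes `h (·, t)` Lipschitz on `‖z‖ ≤ r`, all
uniformly in `t`. Hence `φ (z, ·)` is a strictly increasing bijection of `ℝ` whose difference
quotients are pinched between two positive constants, and `φ` is Lipschitz in `z` on bounded
`t`-ranges; these two facts give the local Lipschitz bounds for `Φ` and for its fiberwise inverse.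
Harmonicity of `φ (·, t)` comes from integrating the holomorphic representatives in `t`; they are
measurable in `t` because their Taylor coefficients are limits of difference quotients of `h`.
-/

open MeasureTheory

/-- A function `u : ℂ → ℝ` is harmonic on the open unit disk iff it is the real part of a
holomorphic function there (the disk is simply connected). -/
def IsHarmonicOnDisk (u : ℂ → ℝ) : Prop :=
  ∃ F : ℂ → ℂ, DifferentiableOn ℂ F (Metric.ball 0 1) ∧
    ∀ z ∈ Metric.ball (0 : ℂ) 1, (F z).re = u z

open Metric Set Filter Topology

noncomputable def harnackBound (r : ℝ) : ℝ := (1 + r) / (1 - r)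

/-- Cauchy's estimate on the disk of radius `(1 - r) / 2` around a point of norm at most `r`,
which lies in the disk of radius `(1 + r) / 2`. -/
noncomputable def harnackDerivBound (r : ℝ) : ℝ := harnackBound ((1 + r) / 2) / ((1 - r) / 2)

lemma harnackBound_inv_pos {r : ℝ} (hr0 : 0 ≤ r) (hr : r < 1) : 0 < (harnackBound r)⁻¹ := by
  unfold harnackBound
  exact inv_pos.2 (div_pos (by linarith) (by linarith))

lemma harnack_one_add_div_one_sub {w : ℂ} {r : ℝ} (hw : ‖w‖ ≤ r) (hr : r < 1) :
    ‖(1 + w) / (1 - w)‖ ≤ harnackBound r ∧ (harnackBound r)⁻¹ ≤ ((1 + w) / (1 - w)).re := by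
  have hw0 := norm_nonneg w
  have hnum : ‖1 + w‖ ≤ 1 + r := (norm_add_le _ _).trans (by simpa using hw)
  have hden : ‖1 - w‖ ≤ 1 + r := (norm_sub_le _ _).trans (by simpa using hw)
  have hden' : 1 - r ≤ ‖1 - w‖ := by
    have := norm_sub_norm_le (1 : ℂ) w
    rw [norm_one] at this
    linarith
  constructor
  · rw [norm_div]
    exact div_le_div₀ (by linarith) hnum (by linarith) hden'
  · have hre : ((1 + w) / (1 - w)).re = (1 - ‖w‖ ^ 2) / ‖1 - w‖ ^ 2 := by
      rw [Complex.div_re, ← add_div, Complex.sq_norm, Complex.sq_norm]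
      congr 1
      simp only [Complex.normSq_apply, Complex.add_re, Complex.sub_re, Complex.add_im,
        Complex.sub_im, Complex.one_re, Complex.one_im]
      ring
    have hinv : (harnackBound r)⁻¹ = (1 - r ^ 2) / (1 + r) ^ 2 := by
      rw [harnackBound, inv_div, div_eq_div_iff (by linarith) (by nlinarith)]
      ring
    rw [hre, hinv]
    exact div_le_div₀ (by nlinarith) (by nlinarith) (by nlinarith) (by nlinarith)

/-- The Cayley transform `(F - 1) / (F + 1)` maps the disk into itself and fixes `0`, so the
Schwarz lemma bounds it by `‖z‖`. -/
lemma harnack_of_re_pos {F : ℂ → ℂ} (hF : DifferentiableOn ℂ F (ball 0 1))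
    (hre : ∀ z ∈ ball (0 : ℂ) 1, 0 < (F z).re) (h0 : F 0 = 1) {r : ℝ} (hr : r < 1) {z : ℂ}
    (hz : ‖z‖ ≤ r) : ‖F z‖ ≤ harnackBound r ∧ (harnackBound r)⁻¹ ≤ (F z).re := by
  have hne : ∀ z ∈ ball (0 : ℂ) 1, F z + 1 ≠ 0 := fun z hz hz0 => by
    have := congrArg Complex.re hz0
    simp only [Complex.add_re, Complex.one_re, Complex.zero_re] at this
    linarith [hre z hz]
  set g : ℂ → ℂ := fun z => (F z - 1) / (F z + 1)
  have hg : DifferentiableOn ℂ g (ball 0 1) :=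
    (hF.sub_const 1).div (hF.add_const 1) hne
  have hg_maps : MapsTo g (ball 0 1) (closedBall 0 1) := fun z hz => by
    rw [mem_closedBall_zero_iff, norm_div]
    refine div_le_one_of_le₀ ?_ (norm_nonneg _)
    rw [← sq_le_sq₀ (norm_nonneg _) (norm_nonneg _), Complex.sq_norm, Complex.sq_norm,
      Complex.normSq_apply, Complex.normSq_apply]
    simp only [Complex.add_re, Complex.sub_re, Complex.add_im, Complex.sub_im, Complex.one_re,
      Complex.one_im]
    nlinarith [hre z hz]
  have hz1 : ‖z‖ < 1 := hz.trans_lt hr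
  have hschwarz : ‖g z‖ ≤ ‖z‖ :=
    Complex.norm_le_norm_of_mapsTo_ball hg hg_maps (by simp [g, h0]) hz1
  have hFz : F z = (1 + g z) / (1 - g z) := by
    have := hne z (mem_ball_zero_iff.2 hz1)
    simp only [g]
    field_simp
    ring
  rw [hFz]
  exact harnack_one_add_div_one_sub (hschwarz.trans hz) hr

lemma norm_deriv_le_of_re_pos {F : ℂ → ℂ} (hF : DifferentiableOn ℂ F (ball 0 1))
    (hre : ∀ z ∈ ball (0 : ℂ) 1, 0 < (F z).re) (h0 : F 0 = 1) {r : ℝ} (hr : r < 1) {z : ℂ}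
    (hz : ‖z‖ ≤ r) : ‖deriv F z‖ ≤ harnackDerivBound r := by
  have hsub : closedBall z ((1 - r) / 2) ⊆ closedBall 0 ((1 + r) / 2) :=
    closedBall_subset_closedBall' (by rw [dist_zero_right]; linarith)
  exact Complex.norm_deriv_le_of_forall_mem_sphere_norm_le (by linarith)
    (hF.diffContOnCl_ball (hsub.trans (closedBall_subset_ball (by linarith))))
    fun w hw => (harnack_of_re_pos hF hre h0 (by linarith)
      (mem_closedBall_zero_iff.1 (hsub (sphere_subset_closedBall hw)))).1

namespace IsHarmonicOnDisk

variable {u : ℂ → ℝ}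

lemma exists_holomorphic_eq_one (hu : IsHarmonicOnDisk u) (h0 : u 0 = 1) :
    ∃ F : ℂ → ℂ, DifferentiableOn ℂ F (ball 0 1) ∧ (∀ z ∈ ball (0 : ℂ) 1, (F z).re = u z) ∧
      F 0 = 1 := by
  obtain ⟨G, hG, hGu⟩ := hu
  refine ⟨fun z => G z - (G 0).im * Complex.I, hG.sub_const _, fun z hz => by simp [hGu z hz], ?_⟩
  apply Complex.ext <;> simp [hGu 0 (mem_ball_self one_pos), h0]

lemma harnack (hu : IsHarmonicOnDisk u) (hpos : ∀ z ∈ ball (0 : ℂ) 1, 0 < u z) (h0 : u 0 = 1)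
    {r : ℝ} (hr : r < 1) {z : ℂ} (hz : ‖z‖ ≤ r) :
    (harnackBound r)⁻¹ ≤ u z ∧ u z ≤ harnackBound r := by
  obtain ⟨F, hF, hFu, hF0⟩ := hu.exists_holomorphic_eq_one h0
  have hbounds := harnack_of_re_pos hF (fun w hw => hFu w hw ▸ hpos w hw) hF0 hr hz
  rw [← hFu z (mem_ball_zero_iff.2 (hz.trans_lt hr))]
  exact ⟨hbounds.2, (Complex.re_le_norm _).trans hbounds.1⟩

lemma abs_sub_le (hu : IsHarmonicOnDisk u) (hpos : ∀ z ∈ ball (0 : ℂ) 1, 0 < u z) (h0 : u 0 = 1)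
    {r : ℝ} (hr : r < 1) {z z' : ℂ} (hz : ‖z‖ ≤ r) (hz' : ‖z'‖ ≤ r) :
    |u z - u z'| ≤ harnackDerivBound r * dist z z' := by
  obtain ⟨F, hF, hFu, hF0⟩ := hu.exists_holomorphic_eq_one h0
  have hsub : closedBall (0 : ℂ) r ⊆ ball 0 1 := closedBall_subset_ball hr
  have hmvt : ‖F z - F z'‖ ≤ harnackDerivBound r * ‖z - z'‖ :=
    (convex_closedBall 0 r).norm_image_sub_le_of_norm_deriv_le
      (fun w hw => hF.differentiableAt (isOpen_ball.mem_nhds (hsub hw)))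
      (fun w hw => norm_deriv_le_of_re_pos hF (fun w hw => hFu w hw ▸ hpos w hw) hF0 hr
        (mem_closedBall_zero_iff.1 hw))
      (mem_closedBall_zero_iff.2 hz') (mem_closedBall_zero_iff.2 hz)
  rw [← hFu z (hsub (mem_closedBall_zero_iff.2 hz)),
    ← hFu z' (hsub (mem_closedBall_zero_iff.2 hz')), dist_eq_norm, ← Complex.sub_re]
  exact (Complex.abs_re_le_norm _).trans hmvt

end IsHarmonicOnDisk

section Measurability

variable {α : Type*} [MeasurableSpace α] {f : α → ℂ → ℂ}

/-- The directional derivatives `Re (f' w * v)` are limits of difference quotients of `Re f`. -/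
lemma measurable_deriv_of_measurable_re {U : Set ℂ} (hU : IsOpen U)
    (hf : ∀ a, DifferentiableOn ℂ (f a) U) (hre : ∀ z ∈ U, Measurable fun a => (f a z).re)
    {w : ℂ} (hw : w ∈ U) : Measurable fun a => deriv (f a) w := by
  have hdir : ∀ v : ℂ, Measurable fun a => (deriv (f a) w * v).re := by
    intro v
    classical
    have hline : Continuous fun t : ℝ => w + t * v := by fun_prop
    have hnear : ∀ᶠ t : ℝ in 𝓝[≠] 0, w + t * v ∈ U :=
      eventually_nhdsWithin_of_eventually_nhds
        (hline.tendsto' 0 w (by simp) |>.eventually (hU.mem_nhds hw))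
    refine measurable_of_tendsto_metrizable' (𝓝[≠] (0 : ℝ))
      (f := fun (t : ℝ) a => if w + t * v ∈ U then t⁻¹ * ((f a (w + t * v)).re - (f a w).re) else 0)
      (fun t => ?_) (tendsto_pi_nhds.2 fun a => ?_)
    · split_ifs with ht
      exacts [measurable_const.mul ((hre _ ht).sub (hre w hw)), measurable_const]
    · have hfa : HasDerivAt (f a) (deriv (f a) w) w :=
        ((hf a).differentiableAt (hU.mem_nhds hw)).hasDerivAt
      have hline' : HasDerivAt (fun x : ℂ => w + x * v) v ((0 : ℝ) : ℂ) := by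
        simpa using ((hasDerivAt_id _).mul_const v).const_add w
      have hcomp : HasDerivAt (fun x : ℂ => f a (w + x * v)) (deriv (f a) w * v) ((0 : ℝ) : ℂ) :=
        hfa.comp_of_eq _ hline' (by simp)
      have hslope := hasDerivAt_iff_tendsto_slope_zero.1 hcomp.real_of_complex
      refine hslope.congr' ?_
      filter_upwards [hnear] with t ht
      simp [ht, smul_eq_mul]
  exact measurable_of_re_im (by simpa using hdir 1) (by simpa using hdir (-Complex.I))

/-- `f a z` is the sum of the Taylor series of `f a` at `c`, whose coefficients are measurable in
`a` by iterating `measurable_deriv_of_measurable_re`. -/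
lemma measurable_of_measurable_re {c : ℂ} {R : ℝ} (hf : ∀ a, DifferentiableOn ℂ (f a) (ball c R))
    (hre : ∀ z ∈ ball c R, Measurable fun a => (f a z).re) (hc : Measurable fun a => f a c)
    {z : ℂ} (hz : z ∈ ball c R) : Measurable fun a => f a z := by
  have hiter : ∀ n, ∀ w ∈ ball c R, Measurable fun a => deriv^[n + 1] (f a) w := by
    intro n
    induction n with
    | zero => exact fun w hw => measurable_deriv_of_measurable_re isOpen_ball hf hre hw
    | succ n ih =>
      intro w hw
      simp only [fun a => Function.iterate_succ_apply' deriv (n + 1) (f a)]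
      exact measurable_deriv_of_measurable_re isOpen_ball
        (fun a => (((hf a).analyticOnNhd isOpen_ball).iterated_deriv (n + 1)).differentiableOn)
        (fun w hw => Complex.measurable_re.comp (ih w hw)) hw
  have hcoeff : ∀ n, Measurable fun a => iteratedDeriv n (f a) c := by
    rintro (_ | n)
    · simpa using hc
    · simpa only [iteratedDeriv_eq_iterate] using hiter n c (mem_ball_self (pos_of_mem_ball hz))
  have hterm : ∀ n,
      Measurable fun a => (n.factorial : ℂ)⁻¹ • (z - c) ^ n • iteratedDeriv n (f a) c :=
    fun n => by fun_prop
  exact measurable_of_tendsto_metrizable (fun n => Finset.measurable_sum _ fun k _ => hterm k)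
    (tendsto_pi_nhds.2 fun a => (Complex.hasSum_taylorSeries_on_ball (hf a) hz).tendsto_sum_nat)

end Measurability

lemma differentiableOn_intervalIntegral {F : ℝ → ℂ → ℂ} {U : Set ℂ} (hU : IsOpen U)
    (hF : ∀ s, DifferentiableOn ℂ (F s) U) (hmeas : ∀ z ∈ U, Measurable fun s => F s z)
    (hbound : ∀ K ⊆ U, IsCompact K → ∃ C, ∀ s, ∀ w ∈ K, ‖F s w‖ ≤ C) (a b : ℝ) :
    DifferentiableOn ℂ (fun z => ∫ s in a..b, F s z) U := by
  intro z hz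
  obtain ⟨ε, hε, hball⟩ := Metric.isOpen_iff.1 hU z hz
  have hsub : closedBall z (ε / 2) ⊆ U := (closedBall_subset_ball (by linarith)).trans hball
  obtain ⟨C, hC⟩ := hbound _ hsub (isCompact_closedBall z (ε / 2))
  have hnear : ∀ w ∈ ball z (ε / 4), closedBall w (ε / 4) ⊆ closedBall z (ε / 2) :=
    fun w hw => closedBall_subset_closedBall' (by linarith [mem_ball.1 hw])
  have hmemU : ∀ w ∈ ball z (ε / 4), w ∈ U :=
    fun w hw => hsub (hnear w hw (mem_closedBall_self (by linarith)))
  -- Cauchy's estimate on `closedBall w (ε / 4)` turns `C` into a bound on `deriv (F s) w`.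
  have key := intervalIntegral.hasDerivAt_integral_of_dominated_loc_of_deriv_le
    (F := fun x s => F s x) (F' := fun x s => deriv (F s) x) (a := a) (b := b) (μ := volume)
    (bound := fun _ => C / (ε / 4))
    (ball_mem_nhds z (by linarith))
    (eventually_of_mem (hU.mem_nhds hz) fun x hx => (hmeas x hx).aestronglyMeasurable)
    (IntervalIntegrable.mono_fun' intervalIntegrable_const (hmeas z hz).aestronglyMeasurable
      (ae_of_all _ fun s => hC s z (mem_closedBall_self (by linarith))))
    (measurable_deriv_of_measurable_re hU hF (fun w hw => Complex.measurable_re.comp (hmeas w hw))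
      hz).aestronglyMeasurable
    (ae_of_all _ fun s _ w hw => Complex.norm_deriv_le_of_forall_mem_sphere_norm_le
      (by linarith) ((hF s).diffContOnCl_ball ((hnear w hw).trans hsub))
      fun y hy => hC s y (hnear w hw (sphere_subset_closedBall hy)))
    intervalIntegrable_const
    (ae_of_all _ fun s _ w hw => ((hF s).differentiableAt (hU.mem_nhds (hmemU w hw))).hasDerivAt)
  exact key.2.differentiableAt.differentiableWithinAt

lemma isHarmonicOnDisk_intervalIntegral {h : ℂ × ℝ → ℝ}
    (harm : ∀ t : ℝ, IsHarmonicOnDisk fun z => h (z, t))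
    (pos : ∀ t : ℝ, ∀ z ∈ ball (0 : ℂ) 1, 0 < h (z, t)) (hnorm : ∀ t : ℝ, h (0, t) = 1)
    (meas : ∀ z ∈ ball (0 : ℂ) 1, Measurable fun t => h (z, t)) (t : ℝ) :
    IsHarmonicOnDisk fun z => ∫ s in (0 : ℝ)..t, h (z, s) := by
  choose F hF hFh hF0 using fun s => (harm s).exists_holomorphic_eq_one (hnorm s)
  have hFpos : ∀ s, ∀ z ∈ ball (0 : ℂ) 1, 0 < (F s z).re := fun s z hz => hFh s z hz ▸ pos s z hz
  have hmeas : ∀ z ∈ ball (0 : ℂ) 1, Measurable fun s => F s z := fun z hz =>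
    measurable_of_measurable_re hF (fun w hw => by simpa only [hFh _ w hw] using meas w hw)
      (by simpa only [hF0] using measurable_const) hz
  have hbound : ∀ z ∈ ball (0 : ℂ) 1, ∀ s, ‖F s z‖ ≤ harnackBound ‖z‖ := fun z hz s =>
    (harnack_of_re_pos (hF s) (hFpos s) (hF0 s) (mem_ball_zero_iff.1 hz) le_rfl).1
  refine ⟨fun z => ∫ s in (0 : ℝ)..t, F s z, differentiableOn_intervalIntegral isOpen_ball hF hmeas
    (fun K hK hKc => ?_) 0 t, fun z hz => ?_⟩
  · obtain ⟨r, hr, hKr⟩ := exists_lt_subset_ball hKc.isClosed hK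
    exact ⟨harnackBound r, fun s w hw =>
      (harnack_of_re_pos (hF s) (hFpos s) (hF0 s) hr (mem_ball_zero_iff.1 (hKr hw)).le).1⟩
  · have hint : IntervalIntegrable (fun s => F s z) volume 0 t :=
      IntervalIntegrable.mono_fun' intervalIntegrable_const (hmeas z hz).aestronglyMeasurable
        (ae_of_all _ (hbound z hz))
    rw [← RCLike.re_to_complex, ← intervalIntegral.intervalIntegral_re hint]
    exact intervalIntegral.integral_congr fun s _ => hFh s z hz

lemma lipschitzOnWith_prod_of_lipschitzOnWith {α β γ : Type*} [PseudoEMetricSpace α]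
    [PseudoEMetricSpace β] [PseudoEMetricSpace γ] {f : α × β → γ} {s : Set α} {t : Set β}
    {Kα Kβ : NNReal} (hα : ∀ b ∈ t, LipschitzOnWith Kα (fun a => f (a, b)) s)
    (hβ : ∀ a ∈ s, LipschitzOnWith Kβ (fun b => f (a, b)) t) :
    LipschitzOnWith (Kα + Kβ) f (s ×ˢ t) := by
  rintro ⟨a, b⟩ ⟨ha, hb⟩ ⟨a', b'⟩ ⟨ha', hb'⟩
  calc edist (f (a, b)) (f (a', b'))
      ≤ edist (f (a, b)) (f (a', b)) + edist (f (a', b)) (f (a', b')) := edist_triangle _ _ _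
    _ ≤ Kα * edist a a' + Kβ * edist b b' := add_le_add (hα b hb ha ha') (hβ a' ha' hb hb')
    _ ≤ (Kα + Kβ) * edist (a, b) (a', b') := by
      rw [Prod.edist_eq, add_mul]
      gcongr
      exacts [le_max_left _ _, le_max_right _ _]

lemma LocallyLipschitzOn.exists_lipschitzOnWith_ball_inter {α β : Type*} [PseudoMetricSpace α]
    [PseudoEMetricSpace β] {f : α → β} {s : Set α} (hf : LocallyLipschitzOn s f) {x : α}
    (hx : x ∈ s) : ∃ ε > (0 : ℝ), ∃ K, LipschitzOnWith K f (ball x ε ∩ s) := by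
  obtain ⟨K, t, ht, hK⟩ := hf hx
  obtain ⟨ε, hε, hsub⟩ := Metric.mem_nhdsWithin_iff.1 ht
  exact ⟨ε, hε, K, hK.mono hsub⟩

lemma locallyLipschitzOn_ball_prod_univ {E β : Type*} [PseudoMetricSpace E] [PseudoEMetricSpace β]
    {f : E × ℝ → β} {c : E} {R : ℝ}
    (hf : ∀ r, 0 ≤ r → r < R → ∀ T, ∃ K, LipschitzOnWith K f (closedBall c r ×ˢ Icc (-T) T)) :
    LocallyLipschitzOn (ball c R ×ˢ univ) f := by
  rintro ⟨z, t⟩ ⟨hz, -⟩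
  have hzR : dist z c < R := hz
  obtain ⟨K, hK⟩ :=
    hf ((dist z c + R) / 2) (by linarith [dist_nonneg (x := z) (y := c)]) (by linarith) (|t| + 1)
  refine ⟨K, _, mem_nhdsWithin_of_mem_nhds (prod_mem_nhds ?_ (Icc_mem_nhds ?_ ?_)), hK⟩
  · exact closedBall_mem_nhds_of_mem (show dist z c < _ by linarith)
  · linarith [neg_abs_le t]
  · linarith [le_abs_self t]

structure FiberBounds {E : Type*} [PseudoMetricSpace E] (h : E × ℝ → ℝ) (S : Set E)
    (c M L : ℝ) : Prop where
  measurable : ∀ z ∈ S, Measurable fun s => h (z, s)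
  pos : 0 < c
  lower : ∀ z ∈ S, ∀ s, c ≤ h (z, s)
  upper : ∀ z ∈ S, ∀ s, h (z, s) ≤ M
  lipschitz : ∀ s, ∀ z ∈ S, ∀ z' ∈ S, |h (z, s) - h (z', s)| ≤ L * dist z z'

section FiberIntegral

variable {E : Type*}

noncomputable def fiberIntegral (h : E × ℝ → ℝ) (z : E) (t : ℝ) : ℝ := ∫ s in (0 : ℝ)..t, h (z, s)

noncomputable def fiberInverse (h : E × ℝ → ℝ) (z : E) : ℝ → ℝ :=
  Function.invFun (fiberIntegral h z)

@[simp]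
lemma fiberIntegral_zero (h : E × ℝ → ℝ) (z : E) : fiberIntegral h z 0 = 0 :=
  intervalIntegral.integral_same

namespace FiberBounds

variable [PseudoMetricSpace E] {h : E × ℝ → ℝ} {S : Set E} {c M L : ℝ}
  (hb : FiberBounds h S c M L) {z z' : E}
include hb

lemma intervalIntegrable (hz : z ∈ S) (a b : ℝ) :
    IntervalIntegrable (fun s => h (z, s)) volume a b :=
  IntervalIntegrable.mono_fun' intervalIntegrable_const (hb.measurable z hz).aestronglyMeasurable
    (ae_of_all _ fun s =>
      (Real.norm_of_nonneg (hb.pos.trans_le (hb.lower z hz s)).le).trans_le (hb.upper z hz s))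

lemma fiberIntegral_sub (hz : z ∈ S) (t t' : ℝ) :
    fiberIntegral h z t - fiberIntegral h z t' = ∫ s in t'..t, h (z, s) :=
  intervalIntegral.integral_interval_sub_left (hb.intervalIntegrable hz 0 t)
    (hb.intervalIntegrable hz 0 t')

lemma mul_sub_le_fiberIntegral_sub (hz : z ∈ S) {t t' : ℝ} (htt : t' ≤ t) :
    c * (t - t') ≤ fiberIntegral h z t - fiberIntegral h z t' := by
  rw [hb.fiberIntegral_sub hz]
  simpa [mul_comm] using intervalIntegral.integral_mono_on htt intervalIntegrable_const
    (hb.intervalIntegrable hz t' t) fun s _ => hb.lower z hz s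

lemma fiberIntegral_sub_le_mul_sub (hz : z ∈ S) {t t' : ℝ} (htt : t' ≤ t) :
    fiberIntegral h z t - fiberIntegral h z t' ≤ M * (t - t') := by
  rw [hb.fiberIntegral_sub hz]
  simpa [mul_comm] using intervalIntegral.integral_mono_on htt (hb.intervalIntegrable hz t' t)
    intervalIntegrable_const fun s _ => hb.upper z hz s

lemma mul_abs_sub_le (hz : z ∈ S) (t t' : ℝ) :
    c * |t - t'| ≤ |fiberIntegral h z t - fiberIntegral h z t'| := by
  wlog htt : t' ≤ t generalizing t t'
  · rw [abs_sub_comm, abs_sub_comm (fiberIntegral h z t)]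
    exact this t' t (le_of_not_ge htt)
  rw [abs_of_nonneg (sub_nonneg.2 htt)]
  exact (hb.mul_sub_le_fiberIntegral_sub hz htt).trans (le_abs_self _)

lemma abs_sub_le_mul (hz : z ∈ S) (t t' : ℝ) :
    |fiberIntegral h z t - fiberIntegral h z t'| ≤ M * |t - t'| := by
  wlog htt : t' ≤ t generalizing t t'
  · rw [abs_sub_comm, abs_sub_comm t]
    exact this t' t (le_of_not_ge htt)
  have hmono := hb.mul_sub_le_fiberIntegral_sub hz htt
  rw [abs_of_nonneg (sub_nonneg.2 htt),
    abs_of_nonneg ((mul_nonneg hb.pos.le (sub_nonneg.2 htt)).trans hmono)]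
  exact hb.fiberIntegral_sub_le_mul_sub hz htt

lemma abs_fiberIntegral_sub_le (hz : z ∈ S) (hz' : z' ∈ S) (t : ℝ) :
    |fiberIntegral h z t - fiberIntegral h z' t| ≤ L * dist z z' * |t| := by
  rw [fiberIntegral, fiberIntegral, ← intervalIntegral.integral_sub
    (hb.intervalIntegrable hz 0 t) (hb.intervalIntegrable hz' 0 t)]
  simpa using intervalIntegral.norm_integral_le_of_norm_le_const (a := 0) (b := t)
    fun s _ => (Real.norm_eq_abs _).trans_le (hb.lipschitz s z hz z' hz')

lemma strictMono (hz : z ∈ S) : StrictMono (fiberIntegral h z) := fun t t' htt => by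
  have := hb.mul_sub_le_fiberIntegral_sub hz htt.le
  nlinarith [mul_pos hb.pos (sub_pos.2 htt)]

lemma surjective (hz : z ∈ S) : Function.Surjective (fiberIntegral h z) := by
  refine (intervalIntegral.continuous_primitive (hb.intervalIntegrable hz) 0).surjective ?_ ?_
  · refine tendsto_atTop_mono' _ ?_ (tendsto_id.const_mul_atTop hb.pos)
    filter_upwards [eventually_ge_atTop 0] with t ht
    have := hb.mul_sub_le_fiberIntegral_sub hz ht
    simp only [fiberIntegral_zero, sub_zero] at this
    exact this
  · refine tendsto_atBot_mono' _ ?_ (tendsto_id.const_mul_atBot hb.pos)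
    filter_upwards [eventually_le_atBot 0] with t ht
    have := hb.mul_sub_le_fiberIntegral_sub hz ht
    simp only [fiberIntegral_zero, zero_sub] at this
    exact (by linarith : fiberIntegral h z t ≤ c * t)

lemma fiberIntegral_fiberInverse (hz : z ∈ S) (u : ℝ) :
    fiberIntegral h z (fiberInverse h z u) = u :=
  Function.invFun_eq (hb.surjective hz u)

lemma fiberInverse_fiberIntegral (hz : z ∈ S) (t : ℝ) :
    fiberInverse h z (fiberIntegral h z t) = t :=
  Function.leftInverse_invFun (hb.strictMono hz).injective t

lemma mul_abs_fiberInverse_sub_le (hz : z ∈ S) (u u' : ℝ) :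
    c * |fiberInverse h z u - fiberInverse h z u'| ≤ |u - u'| := by
  simpa [hb.fiberIntegral_fiberInverse hz] using hb.mul_abs_sub_le hz (fiberInverse h z u)
    (fiberInverse h z u')

lemma mul_abs_fiberInverse_sub_fiberInverse_le (hz : z ∈ S) (hz' : z' ∈ S) (u : ℝ) :
    c * |fiberInverse h z u - fiberInverse h z' u| ≤
      L * dist z z' * |fiberInverse h z u| :=
  calc c * |fiberInverse h z u - fiberInverse h z' u|
      ≤ |fiberIntegral h z' (fiberInverse h z u) - fiberIntegral h z' (fiberInverse h z' u)| :=
        hb.mul_abs_sub_le hz' _ _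
    _ = |fiberIntegral h z' (fiberInverse h z u) - fiberIntegral h z (fiberInverse h z u)| := by
        rw [hb.fiberIntegral_fiberInverse hz', hb.fiberIntegral_fiberInverse hz]
    _ ≤ L * dist z z' * |fiberInverse h z u| := by
        rw [dist_comm]
        exact hb.abs_fiberIntegral_sub_le hz' hz _

lemma lipschitzOnWith_fiberIntegral (T : ℝ) : ∃ K,
    LipschitzOnWith K (fun p : E × ℝ => (p.1, fiberIntegral h p.1 p.2)) (S ×ˢ Icc (-T) T) := by
  have hz : ∀ t ∈ Icc (-T) T, LipschitzOnWith (Real.toNNReal (L * T))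
      (fun z => fiberIntegral h z t) S := fun t ht =>
    LipschitzOnWith.of_dist_le' fun z hz z' hz' => by
      have hL : 0 ≤ L * dist z z' := (abs_nonneg _).trans (hb.lipschitz 0 z hz z' hz')
      calc dist (fiberIntegral h z t) (fiberIntegral h z' t) ≤ L * dist z z' * |t| :=
            hb.abs_fiberIntegral_sub_le hz hz' t
        _ ≤ L * dist z z' * T := by gcongr; exact abs_le.2 ht
        _ = L * T * dist z z' := by ring
  have ht : ∀ z ∈ S, LipschitzOnWith (Real.toNNReal M) (fiberIntegral h z) (Icc (-T) T) :=
    fun z hz => LipschitzOnWith.of_dist_le' fun t _ t' _ => hb.abs_sub_le_mul hz t t'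
  exact ⟨_, LipschitzWith.prod_fst.lipschitzOnWith.prodMk
    (lipschitzOnWith_prod_of_lipschitzOnWith hz ht)⟩

lemma lipschitzOnWith_fiberInverse (T : ℝ) : ∃ K,
    LipschitzOnWith K (fun p : E × ℝ => (p.1, fiberInverse h p.1 p.2)) (S ×ˢ Icc (-T) T) := by
  have hz : ∀ u ∈ Icc (-T) T, LipschitzOnWith (Real.toNNReal (L * T / c ^ 2))
      (fun z => fiberInverse h z u) S := fun u hu =>
    LipschitzOnWith.of_dist_le' fun z hz z' hz' => by
      have hL : 0 ≤ L * dist z z' := (abs_nonneg _).trans (hb.lipschitz 0 z hz z' hz')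
      have hinv : c * |fiberInverse h z u| ≤ T := by
        have := hb.mul_abs_sub_le hz (fiberInverse h z u) 0
        rw [hb.fiberIntegral_fiberInverse hz, fiberIntegral_zero, sub_zero, sub_zero] at this
        exact this.trans (abs_le.2 hu)
      rw [Real.dist_eq, div_mul_eq_mul_div, le_div_iff₀ (pow_pos hb.pos 2)]
      calc |fiberInverse h z u - fiberInverse h z' u| * c ^ 2
          = c * (c * |fiberInverse h z u - fiberInverse h z' u|) := by ring
        _ ≤ c * (L * dist z z' * |fiberInverse h z u|) :=
          mul_le_mul_of_nonneg_left (hb.mul_abs_fiberInverse_sub_fiberInverse_le hz hz' u)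
            hb.pos.le
        _ = L * dist z z' * (c * |fiberInverse h z u|) := by ring
        _ ≤ L * dist z z' * T := mul_le_mul_of_nonneg_left hinv hL
        _ = L * T * dist z z' := by ring
  have hu : ∀ z ∈ S, LipschitzOnWith (Real.toNNReal c⁻¹) (fiberInverse h z) (Icc (-T) T) :=
    fun z hz => LipschitzOnWith.of_dist_le' fun u _ u' _ => by
      rw [Real.dist_eq, Real.dist_eq, inv_mul_eq_div, le_div_iff₀ hb.pos, mul_comm]
      exact hb.mul_abs_fiberInverse_sub_le hz u u'
  exact ⟨_, LipschitzWith.prod_fst.lipschitzOnWith.prodMk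
    (lipschitzOnWith_prod_of_lipschitzOnWith hz hu)⟩

end FiberBounds

end FiberIntegral

lemma fiberBounds_closedBall {h : ℂ × ℝ → ℝ} (harm : ∀ t : ℝ, IsHarmonicOnDisk fun z => h (z, t))
    (pos : ∀ t : ℝ, ∀ z ∈ ball (0 : ℂ) 1, 0 < h (z, t)) (hnorm : ∀ t : ℝ, h (0, t) = 1)
    (meas : ∀ z ∈ ball (0 : ℂ) 1, Measurable fun t => h (z, t)) {r : ℝ} (hr0 : 0 ≤ r)
    (hr : r < 1) :
    FiberBounds h (closedBall 0 r) (harnackBound r)⁻¹ (harnackBound r) (harnackDerivBound r) where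
  measurable z hz := meas z (closedBall_subset_ball hr hz)
  pos := harnackBound_inv_pos hr0 hr
  lower _ hz s := ((harm s).harnack (pos s) (hnorm s) hr (mem_closedBall_zero_iff.1 hz)).1
  upper _ hz s := ((harm s).harnack (pos s) (hnorm s) hr (mem_closedBall_zero_iff.1 hz)).2
  lipschitz s _ hz _ hz' := (harm s).abs_sub_le (pos s) (hnorm s) hr
    (mem_closedBall_zero_iff.1 hz) (mem_closedBall_zero_iff.1 hz')

/-- The fiberwise-integration map `Φ(z,t) = (z, ∫₀ᵗ h(z,s) ds)` of Section 4.1: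
if `h(·,t)` is a positive harmonic function on the unit disk `𝔻` normalized by
`h(0,t) = 1` for every `t`, and `h(z,·)` is measurable for every `z ∈ 𝔻`, then `Φ`
is a bijection of `𝔻 × ℝ` onto itself which, together with its inverse, is locally
Lipschitz (in particular a homeomorphism), and `z ↦ φ(z,t)` is harmonic on `𝔻` for
every `t`. -/
theorem fiberwise_integration_locally_biLipschitz
    (h : ℂ × ℝ → ℝ)
    (harm : ∀ t : ℝ, IsHarmonicOnDisk fun z => h (z, t))
    (pos : ∀ t : ℝ, ∀ z ∈ Metric.ball (0 : ℂ) 1, 0 < h (z, t))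
    (hnorm : ∀ t : ℝ, h (0, t) = 1)
    (meas : ∀ z ∈ Metric.ball (0 : ℂ) 1, Measurable fun t => h (z, t)) :
    ∀ (D : Set (ℂ × ℝ)), D = (Metric.ball (0 : ℂ) 1) ×ˢ (Set.univ : Set ℝ) →
    ∀ (Φ : ℂ × ℝ → ℂ × ℝ), Φ = (fun p => (p.1, ∫ s in (0 : ℝ)..p.2, h (p.1, s))) →
      Set.BijOn Φ D D ∧
      (∃ Ψ : ℂ × ℝ → ℂ × ℝ,
        Set.InvOn Ψ Φ D D ∧
        ContinuousOn Φ D ∧ ContinuousOn Ψ D ∧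
        (∀ p ∈ D, ∃ ε > (0 : ℝ), ∃ K : NNReal,
          LipschitzOnWith K Φ (Metric.ball p ε ∩ D)) ∧
        (∀ p ∈ D, ∃ ε > (0 : ℝ), ∃ K : NNReal,
          LipschitzOnWith K Ψ (Metric.ball p ε ∩ D))) ∧
      (∀ t : ℝ, IsHarmonicOnDisk fun z => ∫ s in (0 : ℝ)..t, h (z, s)) := by
  rintro D rfl Φ rfl
  have hfb : ∀ r, 0 ≤ r → r < 1 → FiberBounds h (closedBall 0 r) (harnackBound r)⁻¹
      (harnackBound r) (harnackDerivBound r) :=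
    fun _ hr0 hr => fiberBounds_closedBall harm pos hnorm meas hr0 hr
  have hfiber : ∀ p ∈ ball (0 : ℂ) 1 ×ˢ (univ : Set ℝ), FiberBounds h (closedBall 0 ‖p.1‖)
      (harnackBound ‖p.1‖)⁻¹ (harnackBound ‖p.1‖) (harnackDerivBound ‖p.1‖) :=
    fun p hp => hfb _ (norm_nonneg _) (mem_ball_zero_iff.1 hp.1)
  have hmem : ∀ z : ℂ, z ∈ closedBall 0 ‖z‖ := fun z => mem_closedBall_zero_iff.2 le_rfl
  set Ψ : ℂ × ℝ → ℂ × ℝ := fun p => (p.1, fiberInverse h p.1 p.2)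
  have hinv : InvOn Ψ (fun p => (p.1, fiberIntegral h p.1 p.2)) (ball 0 1 ×ˢ univ)
      (ball 0 1 ×ˢ univ) :=
    ⟨fun p hp => Prod.ext rfl ((hfiber p hp).fiberInverse_fiberIntegral (hmem p.1) p.2),
      fun p hp => Prod.ext rfl ((hfiber p hp).fiberIntegral_fiberInverse (hmem p.1) p.2)⟩
  have hΦ : LocallyLipschitzOn (ball 0 1 ×ˢ univ) fun p : ℂ × ℝ => (p.1, fiberIntegral h p.1 p.2) :=
    locallyLipschitzOn_ball_prod_univ fun r hr0 hr => (hfb r hr0 hr).lipschitzOnWith_fiberIntegral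
  have hΨ : LocallyLipschitzOn (ball 0 1 ×ˢ univ) Ψ :=
    locallyLipschitzOn_ball_prod_univ fun r hr0 hr => (hfb r hr0 hr).lipschitzOnWith_fiberInverse
  exact ⟨hinv.bijOn (fun p hp => ⟨hp.1, trivial⟩) (fun p hp => ⟨hp.1, trivial⟩),
    ⟨Ψ, hinv, hΦ.continuousOn, hΨ.continuousOn,
      fun p hp => hΦ.exists_lipschitzOnWith_ball_inter hp,
      fun p hp => hΨ.exists_lipschitzOnWith_ball_inter hp⟩,
    isHarmonicOnDisk_intervalIntegral harm pos hnorm meas⟩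
end
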